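/- Let A ∈ ℝ^{m×n} (m ≥ 2) with all rows nonzero and pairwise linearly independent, b ∈ ℝᵐ with Ax = b consistent, and set δ = min_{i≠j} |⟨aᵢ/‖aᵢ‖, a_j/‖a_j‖⟩|, γ₂ = max_{i≠j} ∑_{k≠i,j} ‖a_k‖². Suppose x satisfies: (i) x − x* ∈ Range(Aᵀ) for the solution x* of the GMIRK analysis; (ii) ⟨a_j, x⟩ = b_j and ⟨a_{j'}, x⟩ = b_{j'} for two distinct indices j ≠ j'; and (iii) the next iterate x⁺ is the GMIRK update using a row i ∈ I with |⟨aᵢ,x⟩−bᵢ|² ≥ ε ‖Ax−b‖²‖aᵢ‖² where ε ≥ 1/γ₂ and previous row c = a_j. Then ‖x⁺ − x*‖² ≤ (1 − σ_min(A)²/((1−δ²)γ₂)) ‖x − x*‖². -/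
import Mathlib


open RealInnerProductSpace

set_option maxHeartbeats 4000000 in
/-- One-step deterministic contraction of the GMIRK method in the steady regime:
if `x − x* ∈ Range(Aᵀ)`, the residual vanishes on two distinct rows `j ≠ j'`,
and the next row `i` satisfies the greedy criterion with threshold `ε ≥ 1/γ₂`,
then `‖x⁺ − x*‖² ≤ (1 − σ_min(A)²/((1−δ²)γ₂)) ‖x − x*‖²`. -/
theorem stmt_19 {m n : ℕ} (hm : 2 ≤ m) (a : Fin m → EuclideanSpace ℝ (Fin n))
    (ha : ∀ i, a i ≠ 0)
    (hind : ∀ i j : Fin m, i ≠ j → LinearIndependent ℝ ![a i, a j])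
    (b : Fin m → ℝ) (xs : EuclideanSpace ℝ (Fin n)) (hsol : ∀ i, ⟪a i, xs⟫ = b i)
    (x : EuclideanSpace ℝ (Fin n)) (hx : x - xs ∈ Submodule.span ℝ (Set.range a))
    (j j' : Fin m) (hjj' : j ≠ j') (hj : ⟪a j, x⟫ = b j) (hj' : ⟪a j', x⟫ = b j')
    (i : Fin m) (hij : i ≠ j) (ε : ℝ)
    (hε : ε ≥ 1 / ((Finset.univ : Finset (Fin m)).offDiag.sup'
        (⟨(⟨0, by omega⟩, ⟨1, by omega⟩), by
          simp [Finset.mem_offDiag, Fin.ext_iff]⟩ :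
          ((Finset.univ : Finset (Fin m)).offDiag).Nonempty)
        (fun p => ∑ k ∈ (Finset.univ.erase p.1).erase p.2, ‖a k‖ ^ 2)))
    (hgreedy : (⟪a i, x⟫ - b i) ^ 2
      ≥ ε * (∑ k, (⟪a k, x⟫ - b k) ^ 2) * ‖a i‖ ^ 2) :
    let β : ℝ := ⟪a i, a j⟫ * (⟪a i, x⟫ - b i)
      / (‖a i‖ ^ 2 * ‖a j‖ ^ 2 - ⟪a i, a j⟫ ^ 2)
    let w := x + β • a j
    let xp := w - ((⟪a i, w⟫ - b i) / ‖a i‖ ^ 2) • a i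
    let δ : ℝ := (Finset.univ : Finset (Fin m)).offDiag.inf'
      (⟨(⟨0, by omega⟩, ⟨1, by omega⟩), by
        simp [Finset.mem_offDiag, Fin.ext_iff]⟩ :
        ((Finset.univ : Finset (Fin m)).offDiag).Nonempty)
      (fun p => |⟪(‖a p.1‖⁻¹ • a p.1 : EuclideanSpace ℝ (Fin n)),
        ‖a p.2‖⁻¹ • a p.2⟫|)
    let γ₂ : ℝ := (Finset.univ : Finset (Fin m)).offDiag.sup'
      (⟨(⟨0, by omega⟩, ⟨1, by omega⟩), by
        simp [Finset.mem_offDiag, Fin.ext_iff]⟩ :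
        ((Finset.univ : Finset (Fin m)).offDiag).Nonempty)
      (fun p => ∑ k ∈ (Finset.univ.erase p.1).erase p.2, ‖a k‖ ^ 2)
    let σminSq : ℝ := sInf {t : ℝ | ∃ u : EuclideanSpace ℝ (Fin n),
        u ∈ Submodule.span ℝ (Set.range a) ∧ u ≠ 0 ∧
        t = (∑ k, ⟪a k, u⟫ ^ 2) / ‖u‖ ^ 2}
    ‖xp - xs‖ ^ 2 ≤ (1 - σminSq / ((1 - δ ^ 2) * γ₂)) * ‖x - xs‖ ^ 2 := by
  intro β w xp δ γ₂ σminSq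
  have hmemij : (i, j) ∈ (Finset.univ : Finset (Fin m)).offDiag := by
    simp [Finset.mem_offDiag, hij]
  have hβeq : β = ⟪a i, a j⟫ * (⟪a i, x⟫ - b i)
      / (‖a i‖ ^ 2 * ‖a j‖ ^ 2 - ⟪a i, a j⟫ ^ 2) := rfl
  have hweq : w = x + β • a j := rfl
  have hxpeq : xp = w - ((⟪a i, w⟫ - b i) / ‖a i‖ ^ 2) • a i := rfl
  have hδeq : δ = (Finset.univ : Finset (Fin m)).offDiag.inf' ⟨(i, j), hmemij⟩
      (fun p => |⟪(‖a p.1‖⁻¹ • a p.1 : EuclideanSpace ℝ (Fin n)),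
        ‖a p.2‖⁻¹ • a p.2⟫|) := rfl
  have hγeq : γ₂ = (Finset.univ : Finset (Fin m)).offDiag.sup' ⟨(i, j), hmemij⟩
      (fun p => ∑ k ∈ (Finset.univ.erase p.1).erase p.2, ‖a k‖ ^ 2) := rfl
  have hσeq : σminSq = sInf {t : ℝ | ∃ u : EuclideanSpace ℝ (Fin n),
      u ∈ Submodule.span ℝ (Set.range a) ∧ u ≠ 0 ∧
      t = (∑ k, ⟪a k, u⟫ ^ 2) / ‖u‖ ^ 2} := rfl
  have hε' : ε ≥ 1 / γ₂ := hε
  clear_value xp w β δ γ₂ σminSq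
  clear hε
  set e : EuclideanSpace ℝ (Fin n) := x - xs with he
  set α : ℝ := ⟪a i, x⟫ - b i with hα
  set g : ℝ := ⟪a i, a j⟫ with hg
  set D : ℝ := ‖a i‖ ^ 2 * ‖a j‖ ^ 2 - g ^ 2 with hDdef
  have hai : (0:ℝ) < ‖a i‖ ^ 2 := by
    have := norm_pos_iff.2 (ha i); positivity
  have haj : (0:ℝ) < ‖a j‖ ^ 2 := by
    have := norm_pos_iff.2 (ha j); positivity
  have hain : (0:ℝ) < ‖a i‖ := norm_pos_iff.2 (ha i)
  have hajn : (0:ℝ) < ‖a j‖ := norm_pos_iff.2 (ha j)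
  -- strict Cauchy-Schwarz
  have habs : |g| < ‖a i‖ * ‖a j‖ := by
    have hLI := LinearIndependent.pair_iff.1 (hind i j hij)
    have h1 : (‖a j‖ : ℝ) • a i ≠ ‖a i‖ • a j := by
      intro hcon
      have : (‖a j‖ : ℝ) • a i + (-‖a i‖) • a j = 0 := by
        rw [neg_smul, ← hcon]; abel
      exact hajn.ne' (hLI _ _ this).1
    have h2 : (‖a j‖ : ℝ) • a i ≠ ‖a i‖ • (-(a j)) := by
      intro hcon
      have : (‖a j‖ : ℝ) • a i + ‖a i‖ • a j = 0 := by
        rw [smul_neg] at hcon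
        rw [hcon]; abel
      exact hajn.ne' (hLI _ _ this).1
    have hlt1 : ⟪a i, a j⟫ < ‖a i‖ * ‖a j‖ :=
      inner_lt_norm_mul_iff_real.2 h1
    have hlt2 : ⟪a i, -(a j)⟫ < ‖a i‖ * ‖a j‖ := by
      have := inner_lt_norm_mul_iff_real (x := a i) (y := -(a j))
      rw [norm_neg] at this
      exact this.2 h2
    rw [inner_neg_right] at hlt2
    rw [hg, abs_lt]
    constructor <;> [linarith; exact hlt1]
  have hD : (0:ℝ) < D := by
    have h2 : g ^ 2 < (‖a i‖ * ‖a j‖) ^ 2 := by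
      rw [← sq_abs g]
      exact pow_lt_pow_left₀ habs (abs_nonneg _) (by norm_num)
    rw [hDdef]; nlinarith
  have hDne : ‖a i‖ ^ 2 * ‖a j‖ ^ 2 - g ^ 2 ≠ 0 := by rw [← hDdef]; exact hD.ne'
  -- residuals
  have hresid : ∀ k, ⟪a k, x⟫ - b k = ⟪a k, e⟫ := by
    intro k
    rw [he, inner_sub_right, hsol k]
  have hαe : α = ⟪a i, e⟫ := hresid i
  have hαe' : α = ⟪e, a i⟫ := by rw [hαe, real_inner_comm]
  have hje : ⟪a j, e⟫ = 0 := by rw [← hresid j, hj]; ring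
  have hje' : ⟪e, a j⟫ = 0 := by rw [real_inner_comm]; exact hje
  have hβ : β = g * α / D := hβeq
  clear_value e α g D
  clear hβeq
  have hw : ⟪a i, w⟫ = ⟪a i, x⟫ + β * g := by
    rw [hweq, inner_add_right, real_inner_smul_right, hg]
  have hwb : ⟪a i, w⟫ - b i = α + β * g := by rw [hw, hα]; ring
  have ht0 : (⟪a i, w⟫ - b i) / ‖a i‖ ^ 2 = α * ‖a j‖ ^ 2 / D := by
    rw [hwb, hβ, hDdef]
    field_simp [hDne]
    ring
  set t₀ : ℝ := α * ‖a j‖ ^ 2 / D with ht0def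
  have hxp : xp - xs = e + β • a j - t₀ • a i := by
    rw [hxpeq, ht0, hweq, he]
    abel
  clear_value t₀
  -- norm identity
  have hnorm : ‖xp - xs‖ ^ 2 = ‖e‖ ^ 2 - α ^ 2 * ‖a j‖ ^ 2 / D := by
    rw [hxp]
    have expand : ‖e + β • a j - t₀ • a i‖ ^ 2
        = ‖e‖ ^ 2 + β ^ 2 * ‖a j‖ ^ 2 + t₀ ^ 2 * ‖a i‖ ^ 2
          + 2 * β * ⟪e, a j⟫ - 2 * t₀ * ⟪e, a i⟫ - 2 * β * t₀ * g := by
      rw [← real_inner_self_eq_norm_sq]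
      simp only [inner_sub_left, inner_sub_right, inner_add_left, inner_add_right,
        real_inner_smul_left, real_inner_smul_right]
      rw [real_inner_self_eq_norm_sq, real_inner_self_eq_norm_sq, real_inner_self_eq_norm_sq,
        real_inner_comm (a i) (a j), real_inner_comm e (a j), real_inner_comm e (a i), ← hg]
      ring
    rw [expand, hje', ← hαe', hβ, ht0def, hDdef]
    field_simp [hDne]
    ring
  -- δ facts
  have hδle : δ ≤ |g| / (‖a i‖ * ‖a j‖) := by
    rw [hδeq]
    refine le_trans (Finset.inf'_le _ hmemij) (le_of_eq ?_)
    show |⟪(‖a i‖⁻¹ • a i : EuclideanSpace ℝ (Fin n)), ‖a j‖⁻¹ • a j⟫| = _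
    rw [real_inner_smul_left, real_inner_smul_right, ← hg, abs_mul, abs_mul,
      abs_inv, abs_inv, abs_norm, abs_norm]
    field_simp
  have hδ0 : 0 ≤ δ := by
    rw [hδeq]
    exact Finset.le_inf' _ _ (fun p _ => abs_nonneg _)
  have hδ1 : δ < 1 := by
    refine lt_of_le_of_lt hδle ?_
    rw [div_lt_one (by positivity)]
    exact habs
  have h1δ : (0:ℝ) < 1 - δ ^ 2 := by nlinarith
  have hDle : D ≤ (1 - δ ^ 2) * (‖a i‖ ^ 2 * ‖a j‖ ^ 2) := by
    have h1 : δ ^ 2 ≤ (|g| / (‖a i‖ * ‖a j‖)) ^ 2 := pow_le_pow_left₀ hδ0 hδle 2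
    have h2 : (|g| / (‖a i‖ * ‖a j‖)) ^ 2 = g ^ 2 / (‖a i‖ ^ 2 * ‖a j‖ ^ 2) := by
      rw [div_pow, sq_abs, mul_pow]
    rw [h2] at h1
    have h3 : δ ^ 2 * (‖a i‖ ^ 2 * ‖a j‖ ^ 2) ≤ g ^ 2 := by
      rw [div_eq_mul_inv] at h1
      have := mul_le_mul_of_nonneg_right h1 (le_of_lt (mul_pos hai haj))
      calc δ ^ 2 * (‖a i‖ ^ 2 * ‖a j‖ ^ 2)
          ≤ g ^ 2 * (‖a i‖ ^ 2 * ‖a j‖ ^ 2)⁻¹ * (‖a i‖ ^ 2 * ‖a j‖ ^ 2) := this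
        _ = g ^ 2 := by field_simp
    rw [hDdef]; nlinarith
  -- γ₂ facts
  have hγ0 : (0:ℝ) ≤ γ₂ := by
    rw [hγeq]
    refine le_trans ?_ (Finset.le_sup' _ hmemij)
    exact Finset.sum_nonneg fun k _ => sq_nonneg _
  -- σ facts
  have hSbd : BddBelow {t : ℝ | ∃ u : EuclideanSpace ℝ (Fin n),
      u ∈ Submodule.span ℝ (Set.range a) ∧ u ≠ 0 ∧
      t = (∑ k, ⟪a k, u⟫ ^ 2) / ‖u‖ ^ 2} := by
    refine ⟨0, fun t ht => ?_⟩
    obtain ⟨u, _, _, rfl⟩ := ht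
    positivity
  have hσ0 : 0 ≤ σminSq := by
    rw [hσeq]
    refine le_csInf ⟨_, a i, Submodule.subset_span (Set.mem_range_self i), ha i, rfl⟩ ?_
    rintro t ⟨u, _, _, rfl⟩
    positivity
  have hσle : σminSq * ‖e‖ ^ 2 ≤ ∑ k, ⟪a k, e⟫ ^ 2 := by
    rcases eq_or_ne e 0 with h0 | h0
    · rw [h0]
      simp
    · have hmem : ((∑ k, ⟪a k, e⟫ ^ 2) / ‖e‖ ^ 2) ∈ {t : ℝ | ∃ u : EuclideanSpace ℝ (Fin n),
          u ∈ Submodule.span ℝ (Set.range a) ∧ u ≠ 0 ∧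
          t = (∑ k, ⟪a k, u⟫ ^ 2) / ‖u‖ ^ 2} := ⟨e, hx, h0, rfl⟩
      have h1 : σminSq ≤ (∑ k, ⟪a k, e⟫ ^ 2) / ‖e‖ ^ 2 := hσeq ▸ csInf_le hSbd hmem
      have hE : (0:ℝ) < ‖e‖ ^ 2 := by
        have := norm_pos_iff.2 h0; positivity
      calc σminSq * ‖e‖ ^ 2 ≤ ((∑ k, ⟪a k, e⟫ ^ 2) / ‖e‖ ^ 2) * ‖e‖ ^ 2 :=
            mul_le_mul_of_nonneg_right h1 hE.le
        _ = ∑ k, ⟪a k, e⟫ ^ 2 := by field_simp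
  -- the key inequality
  have key : σminSq / ((1 - δ ^ 2) * γ₂) * ‖e‖ ^ 2 ≤ α ^ 2 * ‖a j‖ ^ 2 / D := by
    rcases eq_or_lt_of_le hγ0 with hγ | hγ
    · rw [← hγ, mul_zero, div_zero, zero_mul]
      exact div_nonneg (by positivity) hD.le
    · have hS0 : (0:ℝ) ≤ ∑ k, ⟪a k, e⟫ ^ 2 := by positivity
      have hgreedy' : α ^ 2 ≥ ε * (∑ k, ⟪a k, e⟫ ^ 2) * ‖a i‖ ^ 2 := by
        have hsum : (∑ k, (⟪a k, x⟫ - b k) ^ 2) = ∑ k, ⟪a k, e⟫ ^ 2 :=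
          Finset.sum_congr rfl (fun k _ => by rw [hresid k])
        calc ε * (∑ k, ⟪a k, e⟫ ^ 2) * ‖a i‖ ^ 2
            = ε * (∑ k, (⟪a k, x⟫ - b k) ^ 2) * ‖a i‖ ^ 2 := by rw [hsum]
          _ ≤ α ^ 2 := hgreedy
      have hB : (∑ k, ⟪a k, e⟫ ^ 2) * ‖a i‖ ^ 2 ≤ γ₂ * α ^ 2 := by
        have h1 : (1 / γ₂) * (∑ k, ⟪a k, e⟫ ^ 2) * ‖a i‖ ^ 2 ≤ α ^ 2 := by
          refine le_trans ?_ hgreedy'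
          have := mul_nonneg hS0 hai.le
          nlinarith
        have h2 := mul_le_mul_of_nonneg_left h1 hγ.le
        calc (∑ k, ⟪a k, e⟫ ^ 2) * ‖a i‖ ^ 2
            = γ₂ * (1 / γ₂ * (∑ k, ⟪a k, e⟫ ^ 2) * ‖a i‖ ^ 2) := by
              field_simp
          _ ≤ γ₂ * α ^ 2 := h2
      rw [div_mul_eq_mul_div, div_le_div_iff₀ (by positivity) hD]
      have hA : σminSq * ‖e‖ ^ 2 * D ≤ (∑ k, ⟪a k, e⟫ ^ 2) * D :=
        mul_le_mul_of_nonneg_right hσle hD.le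
      have hC : (∑ k, ⟪a k, e⟫ ^ 2) * D
          ≤ (∑ k, ⟪a k, e⟫ ^ 2) * ((1 - δ ^ 2) * (‖a i‖ ^ 2 * ‖a j‖ ^ 2)) :=
        mul_le_mul_of_nonneg_left hDle hS0
      have hE2 : (∑ k, ⟪a k, e⟫ ^ 2) * ((1 - δ ^ 2) * (‖a i‖ ^ 2 * ‖a j‖ ^ 2))
          ≤ γ₂ * α ^ 2 * ((1 - δ ^ 2) * ‖a j‖ ^ 2) := by
        have := mul_le_mul_of_nonneg_right hB (mul_nonneg h1δ.le haj.le)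
        calc (∑ k, ⟪a k, e⟫ ^ 2) * ((1 - δ ^ 2) * (‖a i‖ ^ 2 * ‖a j‖ ^ 2))
            = ((∑ k, ⟪a k, e⟫ ^ 2) * ‖a i‖ ^ 2) * ((1 - δ ^ 2) * ‖a j‖ ^ 2) := by ring
          _ ≤ γ₂ * α ^ 2 * ((1 - δ ^ 2) * ‖a j‖ ^ 2) := this
      calc σminSq * ‖e‖ ^ 2 * D ≤ γ₂ * α ^ 2 * ((1 - δ ^ 2) * ‖a j‖ ^ 2) := by linarith
        _ = α ^ 2 * ‖a j‖ ^ 2 * ((1 - δ ^ 2) * γ₂) := by ring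
  -- finish
  rw [hnorm]
  have hrw : (1 - σminSq / ((1 - δ ^ 2) * γ₂)) * ‖e‖ ^ 2
      = ‖e‖ ^ 2 - σminSq / ((1 - δ ^ 2) * γ₂) * ‖e‖ ^ 2 := by ring
  rw [hrw]
  linarith
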